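/- For a strictly increasing a : Fin n → ℝ, the derivative of f(x) = (∑_i a_i e^{x a_i})/(∑_i e^{x a_i}) - E satisfies 0 < f′(x) < (a_n - a_1)² for all x ∈ ℝ. -/

import Mathlib

/-!
After the substitution `w i = exp (x * a i)`, the derivative of the tilted mean
`(∑ a i e^{x a i}) / (∑ e^{x a i})` is the variance of `a` under the probability weights
`w i / ∑ w`. Lagrange's identity writes twice its numerator as `∑ᵢ ∑ⱼ wᵢ wⱼ (aᵢ - aⱼ)²`: this is
positive because `a` takes two distinct values, and at most `(a_max - a_min)² (∑ w)²`, so half of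
it stays strictly below that bound.
-/

open Finset Real

section WeightedVariance

variable {ι : Type*} [Fintype ι] (w b : ι → ℝ)

theorem two_mul_weighted_variance_numerator_eq_sum_sum :
    2 * ((∑ i, w i * b i ^ 2) * ∑ i, w i - (∑ i, w i * b i) ^ 2) =
      ∑ i, ∑ j, w i * w j * (b i - b j) ^ 2 := by
  have expand : ∀ i j, w i * w j * (b i - b j) ^ 2 =
      w i * b i ^ 2 * w j + w i * (w j * b j ^ 2) - 2 * (w i * b i) * (w j * b j) := by
    intro i j; ring
  simp only [expand, sum_add_distrib, sum_sub_distrib, ← mul_sum, ← sum_mul]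
  ring

variable {w b}

theorem sum_sum_mul_sub_sq_pos (hw : ∀ i, 0 < w i) {i j : ι} (hij : b i ≠ b j) :
    0 < ∑ i, ∑ j, w i * w j * (b i - b j) ^ 2 := by
  have nonneg : ∀ k l, 0 ≤ w k * w l * (b k - b l) ^ 2 := fun k l =>
    mul_nonneg (mul_pos (hw k) (hw l)).le (sq_nonneg _)
  calc 0 < w i * w j * (b i - b j) ^ 2 :=
        mul_pos (mul_pos (hw i) (hw j)) (sq_pos_of_ne_zero (sub_ne_zero.2 hij))
    _ ≤ ∑ l, w i * w l * (b i - b l) ^ 2 :=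
        single_le_sum (fun l _ => nonneg i l) (mem_univ j)
    _ ≤ ∑ k, ∑ l, w k * w l * (b k - b l) ^ 2 :=
        single_le_sum (f := fun k => ∑ l, w k * w l * (b k - b l) ^ 2)
          (fun k _ => sum_nonneg fun l _ => nonneg k l) (mem_univ i)

theorem sum_sum_mul_sub_sq_le (hw : ∀ i, 0 ≤ w i) {lo hi : ℝ} (hb : ∀ i, b i ∈ Set.Icc lo hi) :
    ∑ i, ∑ j, w i * w j * (b i - b j) ^ 2 ≤ (hi - lo) ^ 2 * (∑ i, w i) ^ 2 := by
  have spread : ∀ i j, (b i - b j) ^ 2 ≤ (hi - lo) ^ 2 := fun i j =>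
    sq_le_sq' (by linarith [(hb i).1, (hb j).2]) (by linarith [(hb i).2, (hb j).1])
  calc ∑ i, ∑ j, w i * w j * (b i - b j) ^ 2
      ≤ ∑ i, ∑ j, w i * w j * (hi - lo) ^ 2 :=
        sum_le_sum fun i _ => sum_le_sum fun j _ =>
          mul_le_mul_of_nonneg_left (spread i j) (mul_nonneg (hw i) (hw j))
    _ = (hi - lo) ^ 2 * (∑ i, w i) ^ 2 := by
        simp only [← mul_sum, ← sum_mul]
        ring

theorem weighted_variance_mem_Ioo (hw : ∀ i, 0 < w i) {lo hi : ℝ}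
    (hb : ∀ i, b i ∈ Set.Icc lo hi) {i j : ι} (hij : b i ≠ b j) :
    ((∑ i, w i * b i ^ 2) * ∑ i, w i - (∑ i, w i * b i) ^ 2) / (∑ i, w i) ^ 2 ∈
      Set.Ioo 0 ((hi - lo) ^ 2) := by
  have hS : 0 < (∑ i, w i) ^ 2 := pow_pos (sum_pos (fun k _ => hw k) ⟨i, mem_univ i⟩) 2
  have hlohi : 0 < (hi - lo) ^ 2 := by
    rcases hij.lt_or_gt with h | h
    · nlinarith [(hb i).1, (hb j).2]
    · nlinarith [(hb i).2, (hb j).1]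
  have identity := two_mul_weighted_variance_numerator_eq_sum_sum w b
  have pos := sum_sum_mul_sub_sq_pos hw hij
  have le := sum_sum_mul_sub_sq_le (fun k => (hw k).le) hb
  rw [Set.mem_Ioo, div_lt_iff₀ hS]
  exact ⟨div_pos (by linarith) hS, by nlinarith⟩

end WeightedVariance

theorem hasDerivAt_tilted_mean {ι : Type*} [Fintype ι] [Nonempty ι] (b : ι → ℝ) (x : ℝ) :
    HasDerivAt (fun t => (∑ i, b i * exp (t * b i)) / ∑ i, exp (t * b i))
      (((∑ i, exp (x * b i) * b i ^ 2) * ∑ i, exp (x * b i) -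
          (∑ i, exp (x * b i) * b i) ^ 2) / (∑ i, exp (x * b i)) ^ 2) x := by
  have hexp : ∀ i, HasDerivAt (fun t => exp (t * b i)) (exp (x * b i) * b i) x := fun i => by
    simpa using ((hasDerivAt_id x).mul_const (b i)).exp
  have hden := HasDerivAt.fun_sum (u := univ) fun i _ => hexp i
  have hnum := HasDerivAt.fun_sum (u := univ) fun i _ => (hexp i).const_mul (b i)
  have hS : ∑ i, exp (x * b i) ≠ 0 := (sum_pos (fun i _ => exp_pos _) univ_nonempty).ne'
  have hsq : ∑ i, b i * (exp (x * b i) * b i) = ∑ i, exp (x * b i) * b i ^ 2 :=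
    sum_congr rfl fun i _ => by ring
  have hcomm : ∑ i, b i * exp (x * b i) = ∑ i, exp (x * b i) * b i :=
    sum_congr rfl fun i _ => mul_comm _ _
  refine (hnum.div hden hS).congr_deriv ?_
  rw [hsq, hcomm]
  ring

theorem deriv_f_bounds (n : ℕ) (hn : 2 ≤ n) (a : Fin n → ℝ)
    (ha : StrictMono a) (E : ℝ) (x : ℝ) :
    0 < deriv (fun t : ℝ => (∑ i, a i * Real.exp (t * a i)) / (∑ i, Real.exp (t * a i)) - E) x ∧
    deriv (fun t : ℝ => (∑ i, a i * Real.exp (t * a i)) / (∑ i, Real.exp (t * a i)) - E) x <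
      (a ⟨n - 1, by omega⟩ - a ⟨0, by omega⟩) ^ 2 := by
  have : Nonempty (Fin n) := ⟨⟨0, by omega⟩⟩
  rw [((hasDerivAt_tilted_mean a x).sub_const E).deriv]
  refine weighted_variance_mem_Ioo (fun i => exp_pos _) (fun i => ⟨?_, ?_⟩)
    (ha.injective.ne (show (⟨0, by omega⟩ : Fin n) ≠ ⟨n - 1, by omega⟩ by
      simp only [ne_eq, Fin.mk.injEq]; omega))
  · exact ha.monotone (Fin.mk_le_mk.2 (Nat.zero_le _))
  · exact ha.monotone (Fin.mk_le_mk.2 (by omega))
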